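/- arXiv:2401.02596 — 6 statements merged into one kernel-verified Lean document; each statement's English description precedes it below -/
import Mathlib

section
/- Let c₋₁, c₀, c₁ > 0, h > 0, and Y₀ > 0. Let f_h, g_h : (0,∞) → ℝ be arbitrary functions and (w_n)_{n≥0} an arbitrary real sequence. Define recursively S_n = Y_n + (-c₀ + c₁ Y_n + f_h(Y_n)) h + g_h(Y_n) w_n and Y_{n+1} = (S_n + √(S_n² + 4 c₋₁ h))/2. Then Y_n > 0 for all n, and each Y_{n+1} satisfies the implicit scheme relation Y_{n+1} = Y_n + c₋₁ Y_{n+1}⁻¹ h + (-c₀ + c₁ Y_n + f_h(Y_n)) h + g_h(Y_n) w_n. -/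
lemma root_pos (c h s : ℝ) (hc : 0 < c) (hh : 0 < h) :
    0 < (s + Real.sqrt (s ^ 2 + 4 * c * h)) / 2 := by
  have h1 : |s| < Real.sqrt (s ^ 2 + 4 * c * h) := by
    rw [← Real.sqrt_sq_eq_abs]
    apply Real.sqrt_lt_sqrt (sq_nonneg s)
    nlinarith
  have := neg_abs_le s
  linarith

lemma root_eq (c h s : ℝ) (hc : 0 < c) (hh : 0 < h) :
    (s + Real.sqrt (s ^ 2 + 4 * c * h)) / 2
      = s + c * ((s + Real.sqrt (s ^ 2 + 4 * c * h)) / 2)⁻¹ * h := by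
  set y := (s + Real.sqrt (s ^ 2 + 4 * c * h)) / 2 with hy
  have hypos : 0 < y := root_pos c h s hc hh
  have hr : Real.sqrt (s ^ 2 + 4 * c * h) ^ 2 = s ^ 2 + 4 * c * h := by
    apply Real.sq_sqrt; nlinarith
  have hq : y * (y - s) = c * h := by
    rw [hy]; field_simp; nlinarith
  field_simp
  nlinarith

/-- Unconditional positivity preservation of the semi-implicit Euler-type scheme:
with `Y₀ > 0`, arbitrary coefficient modifications `f, g`, arbitrary increments `w`,
and the explicit recursion through the positive root of the quadratic equation,
all iterates are positive and satisfy the implicit scheme relation. -/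
theorem stmt2 (cm1 c₀ c₁ h Y₀ : ℝ) (hcm1 : 0 < cm1) (hc₀ : 0 < c₀) (hc₁ : 0 < c₁)
    (hh : 0 < h) (hY₀ : 0 < Y₀)
    (f g : ℝ → ℝ) (w : ℕ → ℝ) (Y S : ℕ → ℝ)
    (hY0 : Y 0 = Y₀)
    (hS : ∀ n, S n = Y n + (-c₀ + c₁ * Y n + f (Y n)) * h + g (Y n) * w n)
    (hrec : ∀ n, Y (n + 1) = (S n + Real.sqrt ((S n) ^ 2 + 4 * cm1 * h)) / 2) :
    (∀ n, 0 < Y n) ∧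
    ∀ n, Y (n + 1) =
      Y n + cm1 * (Y (n + 1))⁻¹ * h + (-c₀ + c₁ * Y n + f (Y n)) * h
        + g (Y n) * w n := by
  constructor
  · intro n
    cases n with
    | zero => rw [hY0]; exact hY₀
    | succ m => rw [hrec m]; exact root_pos cm1 h (S m) hcm1 hh
  · intro n
    have := root_eq cm1 h (S n) hcm1 hh
    rw [← hrec n, hS n] at this
    linarith
end

section
/- Let c₃ > 0, κ > ρ > 0, α ≥ 1/2, 0 < h ≤ T and x > 0. Then the tamed diffusion modification g_h(x) = c₃ x^ρ / (1 + h^α x^{2κα}) satisfies |g_h(x)| ≤ c₃ h^{-ρ/(2κ)} ≤ c₃ T^{1/2 - ρ/(2κ)} h^{-1/2}. -/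
/-- Bound for the tamed diffusion: for `c₃ > 0`, `κ > ρ > 0`, `α ≥ 1/2`, `0 < h ≤ T`
and `x > 0`, `|c₃ x^ρ/(1 + h^α x^{2κα})| ≤ c₃ h^{-ρ/(2κ)} ≤ c₃ T^{1/2 - ρ/(2κ)} h^{-1/2}`. -/
theorem stmt4 (c₃ κ ρ α h T x : ℝ) (hc₃ : 0 < c₃) (hρ : 0 < ρ) (hκρ : ρ < κ)
    (hα : 1 / 2 ≤ α) (hh : 0 < h) (hhT : h ≤ T) (hx : 0 < x) :
    |(c₃ * x ^ ρ) / (1 + h ^ α * x ^ (2 * κ * α))| ≤ c₃ * h ^ (-ρ / (2 * κ)) ∧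
    c₃ * h ^ (-ρ / (2 * κ)) ≤ c₃ * T ^ (1 / 2 - ρ / (2 * κ)) * h ^ (-(1 : ℝ) / 2) := by
  have hκ : 0 < κ := hρ.trans hκρ
  have hα0 : 0 < α := lt_of_lt_of_le (by norm_num) hα
  have hD : 0 < 1 + h ^ α * x ^ (2 * κ * α) := by positivity
  have hρκα : ρ < 2 * κ * α := by nlinarith
  constructor
  · rw [abs_of_pos (by positivity), div_le_iff₀ hD]
    have key : x ^ ρ ≤ h ^ (-ρ / (2 * κ)) * (1 + h ^ α * x ^ (2 * κ * α)) := by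
      rcases le_or_gt x (h ^ (-1 / (2 * κ))) with hc | hc
      · have h1 : x ^ ρ ≤ (h ^ (-1 / (2 * κ))) ^ ρ :=
          Real.rpow_le_rpow hx.le hc hρ.le
        rw [← Real.rpow_mul hh.le] at h1
        have h2 : (-1 / (2 * κ)) * ρ = -ρ / (2 * κ) := by ring
        rw [h2] at h1
        calc x ^ ρ ≤ h ^ (-ρ / (2 * κ)) := h1
          _ = h ^ (-ρ / (2 * κ)) * 1 := by ring
          _ ≤ h ^ (-ρ / (2 * κ)) * (1 + h ^ α * x ^ (2 * κ * α)) := by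
              apply mul_le_mul_of_nonneg_left _ (by positivity)
              nlinarith [Real.rpow_pos_of_pos hh α, Real.rpow_pos_of_pos hx (2*κ*α)]
      · have h1 : x ^ (ρ - 2 * κ * α) ≤ (h ^ (-1 / (2 * κ))) ^ (ρ - 2 * κ * α) :=
          Real.rpow_le_rpow_of_nonpos (Real.rpow_pos_of_pos hh _) hc.le (by linarith)
        rw [← Real.rpow_mul hh.le] at h1
        have h2 : (-1 / (2 * κ)) * (ρ - 2 * κ * α) = -ρ / (2 * κ) + α := by
          field_simp; ring
        rw [h2] at h1
        have h3 : x ^ ρ = x ^ (ρ - 2 * κ * α) * x ^ (2 * κ * α) := by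
          rw [← Real.rpow_add hx]; ring_nf
        have h4 : h ^ (-ρ / (2 * κ) + α) = h ^ (-ρ / (2 * κ)) * h ^ α :=
          Real.rpow_add hh _ _
        calc x ^ ρ = x ^ (ρ - 2 * κ * α) * x ^ (2 * κ * α) := h3
          _ ≤ h ^ (-ρ / (2 * κ) + α) * x ^ (2 * κ * α) :=
              mul_le_mul_of_nonneg_right h1 (Real.rpow_pos_of_pos hx _).le
          _ = h ^ (-ρ / (2 * κ)) * (h ^ α * x ^ (2 * κ * α)) := by rw [h4]; ring
          _ ≤ h ^ (-ρ / (2 * κ)) * (1 + h ^ α * x ^ (2 * κ * α)) := by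
              apply mul_le_mul_of_nonneg_left (by linarith) (Real.rpow_pos_of_pos hh _).le
    calc c₃ * x ^ ρ ≤ c₃ * (h ^ (-ρ / (2 * κ)) * (1 + h ^ α * x ^ (2 * κ * α))) :=
          mul_le_mul_of_nonneg_left key hc₃.le
      _ = c₃ * h ^ (-ρ / (2 * κ)) * (1 + h ^ α * x ^ (2 * κ * α)) := by ring
  · have he : 0 ≤ 1 / 2 - ρ / (2 * κ) := by
      rw [sub_nonneg, div_le_div_iff₀ (by linarith) (by norm_num)]; linarith
    have h1 : h ^ (-ρ / (2 * κ)) = h ^ (1 / 2 - ρ / (2 * κ)) * h ^ (-(1 : ℝ) / 2) := by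
      rw [← Real.rpow_add hh]; ring_nf
    have h2 : h ^ (1 / 2 - ρ / (2 * κ)) ≤ T ^ (1 / 2 - ρ / (2 * κ)) :=
      Real.rpow_le_rpow hh.le hhT he
    rw [h1]
    have hb := (Real.rpow_pos_of_pos hh (-(1 : ℝ) / 2)).le
    calc c₃ * (h ^ (1 / 2 - ρ / (2 * κ)) * h ^ (-(1:ℝ) / 2))
        = c₃ * h ^ (1 / 2 - ρ / (2 * κ)) * h ^ (-(1:ℝ) / 2) := by ring
      _ ≤ c₃ * T ^ (1 / 2 - ρ / (2 * κ)) * h ^ (-(1:ℝ) / 2) :=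
          mul_le_mul_of_nonneg_right (mul_le_mul_of_nonneg_left h2 hc₃.le) hb
end

section
/- Let c₂, c₃ > 0, κ, ρ > 0, γ ≥ 0 and L ≥ 0, and suppose that -c₂ x^{κ+1} + γ c₃² x^{2ρ} ≤ L for all x > 0. Then for all h > 0, α > 0 and x > 0, the tamed coefficients satisfy x·f_h(x) + γ·g_h(x)² ≤ L. -/
/-! Dividing the coupling bound by the taming denominator `D ≥ 1` keeps it below `L ≥ 0`, and the
diffusion term, being nonnegative and divided by `D²` rather than `D`, only shrinks further. -/

lemma div_add_div_sq_le_of_add_le {a b L D : ℝ} (hb : 0 ≤ b) (hL : 0 ≤ L) (hD : 1 ≤ D)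
    (h : a + b ≤ L) : a / D + b / D ^ 2 ≤ L := by
  have hD₀ : 0 < D := one_pos.trans_le hD
  have h_sq : b / D ^ 2 ≤ b / D :=
    div_le_div_of_nonneg_left hb hD₀ (by nlinarith)
  have h_div : (a + b) / D ≤ L := by
    rw [div_le_iff₀ hD₀]
    rcases le_total 0 (a + b) with hab | hab <;> nlinarith
  rw [add_div] at h_div
  linarith

theorem stmt6_general (c₂ c₃ κ ρ γ L : ℝ) (hγ : 0 ≤ γ) (hL : 0 ≤ L)
    (hbound : ∀ x : ℝ, 0 < x → -c₂ * x ^ (κ + 1) + γ * c₃ ^ 2 * x ^ (2 * ρ) ≤ L) :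
    ∀ h : ℝ, 0 < h → ∀ α : ℝ, 0 < α → ∀ x : ℝ, 0 < x →
      x * ((-c₂ * x ^ κ) / (1 + h ^ α * x ^ (2 * κ * α)))
        + γ * ((c₃ * x ^ ρ) / (1 + h ^ α * x ^ (2 * κ * α))) ^ 2 ≤ L := by
  intro h hh α _ x hx
  have hD : 1 ≤ 1 + h ^ α * x ^ (2 * κ * α) := le_add_of_nonneg_right (by positivity)
  have hdiff : 0 ≤ γ * c₃ ^ 2 * x ^ (2 * ρ) := by positivity
  have key := div_add_div_sq_le_of_add_le hdiff hL hD (hbound x hx)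
  have h_sq : x ^ (2 * ρ) = (x ^ ρ) ^ 2 := by
    rw [mul_comm, Real.rpow_mul hx.le, Real.rpow_two]
  rw [Real.rpow_add_one hx.ne', h_sq] at key
  generalize 1 + h ^ α * x ^ (2 * κ * α) = D at key ⊢
  convert key using 1
  ring

/-- The taming procedure inherits the monotone coupling condition: if
`-c₂ x^{κ+1} + γ c₃² x^{2ρ} ≤ L` for all `x > 0`, then for all `h, α > 0` and `x > 0`
the tamed coefficients `f_h(x) = -c₂ x^κ/(1 + h^α x^{2κα})` and
`g_h(x) = c₃ x^ρ/(1 + h^α x^{2κα})` satisfy `x·f_h(x) + γ·g_h(x)² ≤ L`. -/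
theorem stmt6 (c₂ c₃ κ ρ γ L : ℝ) (hc₂ : 0 < c₂) (hc₃ : 0 < c₃) (hκ : 0 < κ)
    (hρ : 0 < ρ) (hγ : 0 ≤ γ) (hL : 0 ≤ L)
    (hbound : ∀ x : ℝ, 0 < x → -c₂ * x ^ (κ + 1) + γ * c₃ ^ 2 * x ^ (2 * ρ) ≤ L) :
    ∀ h : ℝ, 0 < h → ∀ α : ℝ, 0 < α → ∀ x : ℝ, 0 < x →
      x * ((-c₂ * x ^ κ) / (1 + h ^ α * x ^ (2 * κ * α)))
        + γ * ((c₃ * x ^ ρ) / (1 + h ^ α * x ^ (2 * κ * α))) ^ 2 ≤ L :=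
  stmt6_general c₂ c₃ κ ρ γ L hγ hL hbound
end

section
/- Let c₂, c₃ > 0 and κ, ρ > 1 with κ + 1 = 2ρ, and let δ ≥ 0 satisfy (1+δ)·c₃²·ρ² ≤ 2·c₂·κ. Then for all x, y > 0: (1+δ)·c₃²·(x^ρ - y^ρ)² ≤ 2·c₂·(x - y)·(x^κ - y^κ). -/
/-!
With `κ - 1 = 2 (ρ - 1)`, the fundamental theorem of calculus gives
`x^ρ - y^ρ = ρ ∫_y^x s^(ρ-1) ds` and `x^κ - y^κ = κ ∫_y^x (s^(ρ-1))² ds`, so the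
Cauchy–Schwarz inequality `(∫_y^x g)² ≤ (x - y) ∫_y^x g²` yields
`κ (x^ρ - y^ρ)² ≤ ρ² (x - y)(x^κ - y^κ)`; the hypothesis on the coefficients finishes.
-/

open Real Set intervalIntegral
open scoped Interval

theorem sq_intervalIntegral_le_of_le {f : ℝ → ℝ} {a b : ℝ} (hab : a ≤ b)
    (hf : ContinuousOn f [[a, b]]) :
    (∫ x in a..b, f x) ^ 2 ≤ (b - a) * ∫ x in a..b, f x ^ 2 := by
  have hf₁ : IntervalIntegrable f MeasureTheory.volume a b := hf.intervalIntegrable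
  have hf₂ : IntervalIntegrable (fun x => f x ^ 2) MeasureTheory.volume a b :=
    (hf.pow 2).intervalIntegrable
  -- Cauchy–Schwarz via the discriminant of `t ↦ ∫ (f - t)²`.
  have hquad : ∀ t : ℝ, 0 ≤ (b - a) * (t * t) + (-2 * ∫ x in a..b, f x) * t
      + ∫ x in a..b, f x ^ 2 := by
    intro t
    have hexpand : ∫ x in a..b, (f x - t) ^ 2
        = (b - a) * (t * t) + (-2 * ∫ x in a..b, f x) * t + ∫ x in a..b, f x ^ 2 := by
      simp_rw [sub_sq]
      rw [integral_add (hf₂.sub (hf₁.const_mul _ |>.mul_const _)) intervalIntegrable_const,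
        integral_sub hf₂ ((hf₁.const_mul _).mul_const _), integral_mul_const,
        integral_const_mul, integral_const, smul_eq_mul]
      ring
    rw [← hexpand]
    exact integral_nonneg hab fun x _ => sq_nonneg _
  have := discrim_le_zero hquad
  rw [discrim] at this
  linarith

theorem sq_intervalIntegral_le {f : ℝ → ℝ} {a b : ℝ} (hf : ContinuousOn f [[a, b]]) :
    (∫ x in a..b, f x) ^ 2 ≤ (b - a) * ∫ x in a..b, f x ^ 2 := by
  rcases le_total a b with hab | hba
  · exact sq_intervalIntegral_le_of_le hab hf
  · have := sq_intervalIntegral_le_of_le hba (uIcc_comm a b ▸ hf)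
    rw [integral_symm b a, integral_symm b a (f := fun x => f x ^ 2)]
    linarith

theorem rpow_sub_rpow_eq_mul_integral {r : ℝ} (hr : 0 < r) (a b : ℝ) :
    b ^ r - a ^ r = r * ∫ s in a..b, s ^ (r - 1) := by
  rw [integral_rpow (Or.inl (by linarith)), sub_add_cancel]
  field_simp

theorem mul_sq_rpow_sub_rpow_le {κ ρ x y : ℝ} (hκ : 0 < κ) (hκρ : κ + 1 = 2 * ρ)
    (hx : 0 < x) (hy : 0 < y) :
    κ * (x ^ ρ - y ^ ρ) ^ 2 ≤ ρ ^ 2 * ((x - y) * (x ^ κ - y ^ κ)) := by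
  have hpos : ∀ s ∈ [[y, x]], 0 < s := fun s hs => (lt_min hy hx).trans_le hs.1
  have hIρ : x ^ ρ - y ^ ρ = ρ * ∫ s in y..x, s ^ (ρ - 1) :=
    rpow_sub_rpow_eq_mul_integral (by linarith) y x
  have hIκ : x ^ κ - y ^ κ = κ * ∫ s in y..x, (s ^ (ρ - 1)) ^ 2 := by
    rw [rpow_sub_rpow_eq_mul_integral hκ y x]
    congr 1
    refine integral_congr fun s hs => ?_
    rw [← rpow_natCast, ← rpow_mul (hpos s hs).le]
    congr 1
    push_cast
    linarith
  have hCS := sq_intervalIntegral_le (a := y) (b := x) (f := fun s => s ^ (ρ - 1))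
    fun s hs => (continuousAt_rpow_const s _ (Or.inl (hpos s hs).ne')).continuousWithinAt
  rw [hIρ, hIκ]
  calc κ * (ρ * ∫ s in y..x, s ^ (ρ - 1)) ^ 2
      = κ * ρ ^ 2 * (∫ s in y..x, s ^ (ρ - 1)) ^ 2 := by ring
    _ ≤ κ * ρ ^ 2 * ((x - y) * ∫ s in y..x, (s ^ (ρ - 1)) ^ 2) := by gcongr
    _ = _ := by ring

theorem stmt14_general (c₂ c₃ κ ρ δ : ℝ) (hκ : 1 < κ)
    (hcrit : κ + 1 = 2 * ρ) (hδ : 0 ≤ δ)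
    (hcoef : (1 + δ) * c₃ ^ 2 * ρ ^ 2 ≤ 2 * c₂ * κ) :
    ∀ x y : ℝ, 0 < x → 0 < y →
      (1 + δ) * c₃ ^ 2 * (x ^ ρ - y ^ ρ) ^ 2
        ≤ 2 * c₂ * (x - y) * (x ^ κ - y ^ κ) := by
  intro x y hx hy
  have hκ₀ : 0 < κ := by linarith
  have key := mul_sq_rpow_sub_rpow_le hκ₀ hcrit hx hy
  have hρ₂ : 0 < ρ ^ 2 := by nlinarith
  have hprod : 0 ≤ (x - y) * (x ^ κ - y ^ κ) :=
    nonneg_of_mul_nonneg_right (by nlinarith [sq_nonneg (x ^ ρ - y ^ ρ)]) hρ₂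
  refine le_of_mul_le_mul_left ?_ hκ₀
  calc κ * ((1 + δ) * c₃ ^ 2 * (x ^ ρ - y ^ ρ) ^ 2)
      = (1 + δ) * c₃ ^ 2 * (κ * (x ^ ρ - y ^ ρ) ^ 2) := by ring
    _ ≤ (1 + δ) * c₃ ^ 2 * (ρ ^ 2 * ((x - y) * (x ^ κ - y ^ κ))) := by gcongr
    _ = (1 + δ) * c₃ ^ 2 * ρ ^ 2 * ((x - y) * (x ^ κ - y ^ κ)) := by ring
    _ ≤ 2 * c₂ * κ * ((x - y) * (x ^ κ - y ^ κ)) := by gcongr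
    _ = κ * (2 * c₂ * (x - y) * (x ^ κ - y ^ κ)) := by ring

/-- One-sided Lipschitz-type inequality in the critical case `κ + 1 = 2ρ`:
if `(1+δ) c₃² ρ² ≤ 2 c₂ κ` with `δ ≥ 0`, then for all `x, y > 0`,
`(1+δ) c₃² (x^ρ - y^ρ)² ≤ 2 c₂ (x - y)(x^κ - y^κ)`. -/
theorem stmt14 (c₂ c₃ κ ρ δ : ℝ) (hc₂ : 0 < c₂) (hc₃ : 0 < c₃) (hκ : 1 < κ)
    (hρ : 1 < ρ) (hcrit : κ + 1 = 2 * ρ) (hδ : 0 ≤ δ)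
    (hcoef : (1 + δ) * c₃ ^ 2 * ρ ^ 2 ≤ 2 * c₂ * κ) :
    ∀ x y : ℝ, 0 < x → 0 < y →
      (1 + δ) * c₃ ^ 2 * (x ^ ρ - y ^ ρ) ^ 2
        ≤ 2 * c₂ * (x - y) * (x ^ κ - y ^ κ) :=
  stmt14_general c₂ c₃ κ ρ δ hκ hcrit hδ hcoef
end

section
/- Let c₂, c₃ > 0 and κ, ρ > 1 with κ + 1 > 2ρ, and let δ > 0. Then there exists a constant L ≥ 0 such that for all x, y > 0: (1+δ)·c₃²·(x^ρ - y^ρ)² - 2·c₂·(x - y)·(x^κ - y^κ) ≤ L·(x - y)². -/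
open Real Set

/-- sup bound for `A u^a - B u^b` when `0 < a < b`. -/
lemma aux_bound (A B a b : ℝ) (hA : 0 < A) (hB : 0 < B) (ha : 0 < a) (hab : a < b) :
    ∃ L : ℝ, 0 ≤ L ∧ ∀ u : ℝ, 0 < u → A * u ^ a - B * u ^ b ≤ L := by
  set M : ℝ := max 1 ((A / B) ^ (1 / (b - a))) with hM
  have hM1 : 1 ≤ M := le_max_left _ _
  have hM0 : 0 < M := lt_of_lt_of_le one_pos hM1
  refine ⟨A * M ^ a, by positivity, fun u hu => ?_⟩
  rcases le_total u M with h | h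
  · have h1 : u ^ a ≤ M ^ a := Real.rpow_le_rpow hu.le h ha.le
    have h2 : 0 ≤ B * u ^ b := by positivity
    nlinarith [Real.rpow_pos_of_pos hu a]
  · have hub : (A / B) ^ (1 / (b - a)) ≤ u := le_trans (le_max_right _ _) h
    have hba : 0 < b - a := sub_pos.mpr hab
    have h1 : ((A / B) ^ (1 / (b - a))) ^ (b - a) ≤ u ^ (b - a) :=
      Real.rpow_le_rpow (Real.rpow_nonneg (by positivity) _) hub hba.le
    have h2 : ((A / B) ^ (1 / (b - a))) ^ (b - a) = A / B := by
      rw [← Real.rpow_mul (by positivity), one_div_mul_cancel hba.ne', Real.rpow_one]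
    have h3 : A / B ≤ u ^ (b - a) := h2 ▸ h1
    have h4 : A ≤ B * u ^ (b - a) := by
      rw [div_le_iff₀ hB] at h3; linarith [h3]
    have h5 : u ^ b = u ^ (b - a) * u ^ a := by
      rw [← Real.rpow_add hu]; ring_nf
    have hua : 0 < u ^ a := Real.rpow_pos_of_pos hu a
    have : A * u ^ a ≤ B * u ^ b := by
      rw [h5]; nlinarith
    have : A * u ^ a - B * u ^ b ≤ 0 := by linarith
    have : 0 ≤ A * M ^ a := by positivity
    linarith

/-- MVT upper bound: for `0 < y ≤ x` and `1 ≤ p`, `x^p - y^p ≤ p x^(p-1) (x-y)`. -/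
lemma aux_mvt (x y p : ℝ) (hy : 0 < y) (hyx : y ≤ x) (hp : 1 ≤ p) :
    x ^ p - y ^ p ≤ p * x ^ (p - 1) * (x - y) := by
  rcases eq_or_lt_of_le hyx with rfl | hlt
  · simp
  have hd : ∀ z : ℝ, HasDerivAt (fun t : ℝ => t ^ p) (p * z ^ (p - 1)) z :=
    fun z => Real.hasDerivAt_rpow_const (Or.inr hp)
  obtain ⟨c, hc, hceq⟩ := exists_hasDerivAt_eq_slope (fun t : ℝ => t ^ p)
    (fun z => p * z ^ (p - 1)) hlt
    (fun z _ => (hd z).continuousAt.continuousWithinAt)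
    (fun z _ => hd z)
  have hc0 : 0 < c := lt_trans hy hc.1
  have hcx : c ≤ x := hc.2.le
  have h1 : c ^ (p - 1) ≤ x ^ (p - 1) :=
    Real.rpow_le_rpow hc0.le hcx (by linarith)
  have hxy : 0 < x - y := sub_pos.mpr hlt
  have h2 : (x ^ p - y ^ p) / (x - y) ≤ p * x ^ (p - 1) := by
    rw [← hceq]; nlinarith
  calc x ^ p - y ^ p = (x ^ p - y ^ p) / (x - y) * (x - y) := by
        field_simp
    _ ≤ p * x ^ (p - 1) * (x - y) := by
        apply mul_le_mul_of_nonneg_right h2 hxy.le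

/-- Lower bound: for `0 < y ≤ x` and `1 ≤ p`, `x^(p-1) (x-y) ≤ x^p - y^p`. -/
lemma aux_low (x y p : ℝ) (hy : 0 < y) (hyx : y ≤ x) (hp : 1 ≤ p) :
    x ^ (p - 1) * (x - y) ≤ x ^ p - y ^ p := by
  have hx : 0 < x := lt_of_lt_of_le hy hyx
  have h1 : y ^ (p - 1) ≤ x ^ (p - 1) := Real.rpow_le_rpow hy.le hyx (by linarith)
  have hxp : x ^ p = x ^ (p - 1) * x := by
    rw [← Real.rpow_add_one hx.ne']; ring_nf
  have hyp : y ^ p = y ^ (p - 1) * y := by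
    rw [← Real.rpow_add_one hy.ne']; ring_nf
  rw [hxp, hyp]; nlinarith

/-- key one-sided estimate for `0 < y ≤ x`. -/
lemma aux_key (c₂ c₃ κ ρ δ L : ℝ) (hc₂ : 0 < c₂) (hc₃ : 0 < c₃) (hκ : 1 < κ)
    (hρ : 1 < ρ) (hδ : 0 < δ)
    (hL : ∀ u : ℝ, 0 < u →
      ((1 + δ) * c₃ ^ 2 * ρ ^ 2) * u ^ (2 * ρ - 2) - (2 * c₂) * u ^ (κ - 1) ≤ L)
    (x y : ℝ) (hy : 0 < y) (hyx : y ≤ x) :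
    (1 + δ) * c₃ ^ 2 * (x ^ ρ - y ^ ρ) ^ 2
      - 2 * c₂ * (x - y) * (x ^ κ - y ^ κ) ≤ L * (x - y) ^ 2 := by
  have hx : 0 < x := lt_of_lt_of_le hy hyx
  have h1 : x ^ ρ - y ^ ρ ≤ ρ * x ^ (ρ - 1) * (x - y) := aux_mvt x y ρ hy hyx hρ.le
  have h1' : 0 ≤ x ^ ρ - y ^ ρ := sub_nonneg.mpr (Real.rpow_le_rpow hy.le hyx (by linarith))
  have h2 : x ^ (κ - 1) * (x - y) ≤ x ^ κ - y ^ κ := aux_low x y κ hy hyx hκ.le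
  have hxy : 0 ≤ x - y := sub_nonneg.mpr hyx
  have hsq : (x ^ ρ - y ^ ρ) ^ 2 ≤ (ρ * x ^ (ρ - 1)) ^ 2 * (x - y) ^ 2 := by
    nlinarith [Real.rpow_pos_of_pos hx (ρ - 1)]
  have hrw : (x ^ (ρ - 1)) ^ 2 = x ^ (2 * ρ - 2) := by
    rw [← Real.rpow_natCast (x ^ (ρ - 1)) 2, ← Real.rpow_mul hx.le]
    norm_num; ring_nf
  have hLx := hL x hx
  have hA : (0:ℝ) < (1 + δ) * c₃ ^ 2 := by positivity
  have hstep : (1 + δ) * c₃ ^ 2 * (x ^ ρ - y ^ ρ) ^ 2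
      - 2 * c₂ * (x - y) * (x ^ κ - y ^ κ)
      ≤ (((1 + δ) * c₃ ^ 2 * ρ ^ 2) * x ^ (2 * ρ - 2) - (2 * c₂) * x ^ (κ - 1))
        * (x - y) ^ 2 := by
    have e1 : (1 + δ) * c₃ ^ 2 * (x ^ ρ - y ^ ρ) ^ 2
        ≤ ((1 + δ) * c₃ ^ 2 * ρ ^ 2) * x ^ (2 * ρ - 2) * (x - y) ^ 2 := by
      rw [← hrw]
      calc (1 + δ) * c₃ ^ 2 * (x ^ ρ - y ^ ρ) ^ 2
          ≤ (1 + δ) * c₃ ^ 2 * ((ρ * x ^ (ρ - 1)) ^ 2 * (x - y) ^ 2) :=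
            mul_le_mul_of_nonneg_left hsq hA.le
        _ = ((1 + δ) * c₃ ^ 2 * ρ ^ 2) * (x ^ (ρ - 1)) ^ 2 * (x - y) ^ 2 := by ring
    have e2 : (2 * c₂) * x ^ (κ - 1) * (x - y) ^ 2
        ≤ 2 * c₂ * (x - y) * (x ^ κ - y ^ κ) := by
      have := mul_le_mul_of_nonneg_left h2 (by positivity : (0:ℝ) ≤ 2 * c₂ * (x - y))
      nlinarith
    linarith
  calc _ ≤ _ := hstep
    _ ≤ L * (x - y) ^ 2 := mul_le_mul_of_nonneg_right hLx (by positivity)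

/-- One-sided Lipschitz-type inequality in the non-critical case `κ + 1 > 2ρ`:
for any `δ > 0` there is `L ≥ 0` such that for all `x, y > 0`,
`(1+δ) c₃² (x^ρ - y^ρ)² - 2 c₂ (x - y)(x^κ - y^κ) ≤ L (x - y)²`. -/
theorem stmt15 (c₂ c₃ κ ρ δ : ℝ) (hc₂ : 0 < c₂) (hc₃ : 0 < c₃) (hκ : 1 < κ)
    (hρ : 1 < ρ) (hcrit : 2 * ρ < κ + 1) (hδ : 0 < δ) :
    ∃ L : ℝ, 0 ≤ L ∧ ∀ x y : ℝ, 0 < x → 0 < y →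
      (1 + δ) * c₃ ^ 2 * (x ^ ρ - y ^ ρ) ^ 2
          - 2 * c₂ * (x - y) * (x ^ κ - y ^ κ) ≤ L * (x - y) ^ 2 := by
  obtain ⟨L, hL0, hL⟩ := aux_bound ((1 + δ) * c₃ ^ 2 * ρ ^ 2) (2 * c₂)
    (2 * ρ - 2) (κ - 1) (by positivity) (by positivity) (by linarith) (by linarith)
  refine ⟨L, hL0, fun x y hx hy => ?_⟩
  rcases le_total y x with h | h
  · exact aux_key c₂ c₃ κ ρ δ L hc₂ hc₃ hκ hρ hδ
      (fun u hu => hL u hu) x y hy h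
  · have := aux_key c₂ c₃ κ ρ δ L hc₂ hc₃ hκ hρ hδ
      (fun u hu => hL u hu) y x hx h
    nlinarith [this]
end

section
/- Let c₋₁, c₀, c₁ > 0, T > 0, 0 < h ≤ T, K ≥ 0 and p ≥ 1. Let (Ω, F, P) be a probability space, Y a positive random variable with E[Y^{2p}] < ∞, and W a Gaussian random variable with mean 0 and variance h independent of Y. Let f_h, g_h : (0,∞) → ℝ be measurable with |f_h(x)| ≤ K h^{-1/2} and |g_h(x)| ≤ K h^{-1/2} for all x > 0, and let Y' be the unique positive root of Y' - c₋₁ h (Y')⁻¹ = Y + (-c₀ + c₁ Y + f_h(Y)) h + g_h(Y) W. Then there exist constants Ĉ, C̃ > 0 depending only on p, K, T, c₋₁, c₀, c₁ (and not on h) such that E[(Y')^{2p}] ≤ Ĉ·E[Y^{2p}] + C̃. -/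
open MeasureTheory ProbabilityTheory

open scoped NNReal

/-! The next iterate `y` is the positive root of `y² - z y - c₋₁ h = 0`, so `y ≤ √(c₋₁ h) + |z|`,
and `|z|` is at most an affine function of `Y` plus `K h^{-1/2} |W|`. Raising this to the power
`2p` and integrating, the factor `h^{-p}` is cancelled exactly by the Gaussian moment
`E|W|^{2p} = h^p E|N(0,1)|^{2p}`. -/

lemma rpow_add_add_le {u v w q : ℝ} (hu : 0 ≤ u) (hv : 0 ≤ v) (hw : 0 ≤ w) (hq : 1 ≤ q) :
    (u + v + w) ^ q ≤ 3 ^ (q - 1) * (u ^ q + v ^ q + w ^ q) := by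
  have h := Real.rpow_sum_le_const_mul_sum_rpow_of_nonneg (s := Finset.univ) (f := ![u, v, w]) hq
    (by simp [Fin.forall_fin_succ, hu, hv, hw])
  simpa [Fin.sum_univ_three, add_assoc] using h

section GaussianMoments

variable {Ω : Type*} [MeasurableSpace Ω] {P : Measure Ω} {W : Ω → ℝ}

lemma integrable_abs_rpow_of_map_eq_gaussianReal {μ : ℝ} {v : ℝ≥0} {s : ℝ}
    (hW : Measurable W) (hlaw : P.map W = gaussianReal μ v) (hs : 0 ≤ s) :
    Integrable (fun ω => |W ω| ^ s) P := by
  have hgauss : Integrable (fun x => |x| ^ s) (gaussianReal μ v) := by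
    simpa [ENNReal.toReal_ofReal hs] using
      (memLp_id_gaussianReal' (ENNReal.ofReal s) ENNReal.ofReal_ne_top).integrable_norm_rpow'
  have habs : Measurable fun x : ℝ => |x| ^ s := by fun_prop
  rwa [← hlaw, integrable_map_measure habs.aestronglyMeasurable hW.aemeasurable] at hgauss

lemma integral_abs_rpow_of_map_eq_gaussianReal {v : ℝ≥0} (hW : Measurable W)
    (hlaw : P.map W = gaussianReal 0 v) (s : ℝ) :
    ∫ ω, |W ω| ^ s ∂P = (v : ℝ) ^ (s / 2) * ∫ x, |x| ^ s ∂gaussianReal 0 1 := by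
  have habs : Measurable fun x : ℝ => |x| ^ s := by fun_prop
  have hscale : (gaussianReal 0 1).map (√(v : ℝ) * ·) = gaussianReal 0 v := by
    rw [gaussianReal_map_const_mul, mul_zero, mul_one]
    congr
    simp
  rw [← integral_map hW.aemeasurable habs.aestronglyMeasurable, hlaw, ← hscale,
    integral_map (by fun_prop) habs.aestronglyMeasurable, ← integral_const_mul]
  congr 1 with x
  rw [abs_mul, abs_of_nonneg (Real.sqrt_nonneg _),
    Real.mul_rpow (Real.sqrt_nonneg _) (abs_nonneg _), Real.sqrt_eq_rpow, ← Real.rpow_mul v.coe_nonneg]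
  ring_nf

end GaussianMoments

lemma le_sqrt_add_abs_of_sub_mul_inv_eq {c y z : ℝ} (hc : 0 ≤ c) (hy : 0 < y)
    (h : y - c * y⁻¹ = z) : y ≤ √c + |z| := by
  have hsq : y * y = c + z * y := by
    rw [← h]; field_simp; ring
  by_contra! hlt
  have hsc : √c * √c = c := Real.mul_self_sqrt hc
  nlinarith [Real.sqrt_nonneg c, abs_nonneg z, le_abs_self z,
    mul_le_mul_of_nonneg_left (le_abs_self z) hy.le]

lemma abs_euler_increment_le {x h T c₀ c₁ f g w B : ℝ} (hc₀ : 0 ≤ c₀) (hc₁ : 0 ≤ c₁)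
    (hx : 0 ≤ x) (hh : 0 ≤ h) (hhT : h ≤ T) (hf : |f| ≤ B) (hg : |g| ≤ B) :
    |x + (-c₀ + c₁ * x + f) * h + g * w| ≤ (1 + c₁ * T) * x + c₀ * T + B * h + B * |w| := by
  have hdrift : |(-c₀ + c₁ * x + f) * h| ≤ (c₀ + c₁ * x + B) * h := by
    rw [abs_mul, abs_of_nonneg hh]
    gcongr
    calc |-c₀ + c₁ * x + f| ≤ |-c₀| + |c₁ * x| + |f| := abs_add_three _ _ _
      _ ≤ c₀ + c₁ * x + B := by
        rw [abs_neg, abs_of_nonneg hc₀, abs_of_nonneg (by positivity)]; linarith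
  have hdiff : |g * w| ≤ B * |w| := by
    rw [abs_mul]; exact mul_le_mul_of_nonneg_right hg (abs_nonneg w)
  have hx' : c₁ * x * h ≤ c₁ * x * T := by gcongr
  have hc₀' : c₀ * h ≤ c₀ * T := by gcongr
  calc _ ≤ |x| + |(-c₀ + c₁ * x + f) * h| + |g * w| := abs_add_three _ _ _
    _ ≤ _ := by rw [abs_of_nonneg hx]; nlinarith

lemma next_iterate_le {cm1 c₀ c₁ T K h x y w f g : ℝ} (hcm1 : 0 ≤ cm1) (hc₀ : 0 ≤ c₀)
    (hc₁ : 0 ≤ c₁) (hK : 0 ≤ K) (hh : 0 < h) (hhT : h ≤ T) (hx : 0 ≤ x) (hy : 0 < y)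
    (hf : |f| ≤ K * h ^ (-(1 : ℝ) / 2)) (hg : |g| ≤ K * h ^ (-(1 : ℝ) / 2))
    (heq : y - cm1 * h * y⁻¹ = x + (-c₀ + c₁ * x + f) * h + g * w) :
    y ≤ (1 + c₁ * T) * x + (√(cm1 * T) + c₀ * T + K * √T) + K * h ^ (-(1 : ℝ) / 2) * |w| := by
  have hroot := le_sqrt_add_abs_of_sub_mul_inv_eq (by positivity) hy heq
  have hinc := abs_euler_increment_le (w := w) hc₀ hc₁ hx hh.le hhT hf hg
  have hcm1T : √(cm1 * h) ≤ √(cm1 * T) := Real.sqrt_le_sqrt (by gcongr)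
  have hscale : K * h ^ (-(1 : ℝ) / 2) * h = K * √h := by
    rw [mul_assoc, ← Real.rpow_add_one hh.ne', Real.sqrt_eq_rpow]; norm_num
  have hKT : K * √h ≤ K * √T := by gcongr
  linarith

lemma next_iterate_rpow_le {cm1 c₀ c₁ T K h x y w f g q : ℝ} (hcm1 : 0 ≤ cm1) (hc₀ : 0 ≤ c₀)
    (hc₁ : 0 ≤ c₁) (hT : 0 ≤ T) (hK : 0 ≤ K) (hh : 0 < h) (hhT : h ≤ T) (hx : 0 ≤ x) (hy : 0 < y)
    (hq : 1 ≤ q) (hf : |f| ≤ K * h ^ (-(1 : ℝ) / 2)) (hg : |g| ≤ K * h ^ (-(1 : ℝ) / 2))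
    (heq : y - cm1 * h * y⁻¹ = x + (-c₀ + c₁ * x + f) * h + g * w) :
    y ^ q ≤ 3 ^ (q - 1) * (1 + c₁ * T) ^ q * x ^ q
      + 3 ^ (q - 1) * K ^ q * h ^ (-(q / 2)) * |w| ^ q + 3 ^ (q - 1) * (√(cm1 * T) + c₀ * T + K * √T) ^ q := by
  have hnoise : (K * h ^ (-(1 : ℝ) / 2) * |w|) ^ q = K ^ q * h ^ (-(q / 2)) * |w| ^ q := by
    rw [Real.mul_rpow (by positivity) (abs_nonneg _), Real.mul_rpow hK (by positivity),
      ← Real.rpow_mul hh.le]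
    ring_nf
  calc y ^ q ≤ ((1 + c₁ * T) * x + (√(cm1 * T) + c₀ * T + K * √T)
        + K * h ^ (-(1 : ℝ) / 2) * |w|) ^ q :=
        Real.rpow_le_rpow hy.le (next_iterate_le hcm1 hc₀ hc₁ hK hh hhT hx hy hf hg heq)
          (by linarith)
    _ ≤ 3 ^ (q - 1) * (((1 + c₁ * T) * x) ^ q + (√(cm1 * T) + c₀ * T + K * √T) ^ q
          + (K * h ^ (-(1 : ℝ) / 2) * |w|) ^ q) :=
        rpow_add_add_le (by positivity) (by positivity) (by positivity) hq
    _ = _ := by rw [hnoise, Real.mul_rpow (by positivity) hx]; ring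

lemma integral_le_of_le_affine {Ω : Type*} [MeasurableSpace Ω] {P : Measure Ω}
    [IsProbabilityMeasure P] {F X Z : Ω → ℝ} {a b c : ℝ} (hF : ∀ ω, 0 ≤ F ω)
    (hX : Integrable X P) (hZ : Integrable Z P) (hle : ∀ ω, F ω ≤ a * X ω + b * Z ω + c) :
    ∫ ω, F ω ∂P ≤ a * ∫ ω, X ω ∂P + b * ∫ ω, Z ω ∂P + c := by
  have hXZ : Integrable (fun ω => a * X ω + b * Z ω) P := (hX.const_mul a).add (hZ.const_mul b)
  calc ∫ ω, F ω ∂P ≤ ∫ ω, (a * X ω + b * Z ω + c) ∂P :=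
        integral_mono_of_nonneg (ae_of_all _ hF) (hXZ.add (integrable_const c)) (ae_of_all _ hle)
    _ = _ := by
      rw [integral_add hXZ (integrable_const c), integral_add (hX.const_mul a) (hZ.const_mul b),
        integral_const_mul, integral_const_mul, integral_const, probReal_univ, one_smul]

/-- Rough one-step moment estimate for the positivity-preserving Euler-type
scheme: there exist constants `Ĉ, C̃ > 0` depending only on `p, K, T, c₋₁, c₀, c₁`
(and not on the step-size `h`) such that for any step-size `0 < h ≤ T`, any
positive iterate `Y` with finite `2p`-th moment, any independent Gaussian
increment `W` with mean `0` and variance `h`, and the next iterate `Y'` defined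
as the unique positive root of the implicit relation, one has
`E[(Y')^{2p}] ≤ Ĉ E[Y^{2p}] + C̃`. -/
theorem stmt18 (cm1 c₀ c₁ T K p : ℝ) (hcm1 : 0 < cm1) (hc₀ : 0 < c₀) (hc₁ : 0 < c₁)
    (hT : 0 < T) (hK : 0 ≤ K) (hp : 1 ≤ p) :
    ∃ Chat : ℝ, 0 < Chat ∧ ∃ Ctil : ℝ, 0 < Ctil ∧
      ∀ h : ℝ, 0 < h → h ≤ T →
      ∀ (Ω : Type) (mΩ : MeasurableSpace Ω) (P : Measure Ω), IsProbabilityMeasure P →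
      ∀ (Y W Y' : Ω → ℝ) (fh gh : ℝ → ℝ),
        Measurable fh → Measurable gh → Measurable Y → Measurable W →
        (∀ ω, 0 < Y ω) →
        Integrable (fun ω => (Y ω) ^ (2 * p)) P →
        IndepFun Y W P →
        P.map W = gaussianReal 0 (Real.toNNReal h) →
        (∀ x : ℝ, 0 < x → |fh x| ≤ K * h ^ (-(1 : ℝ) / 2)) →
        (∀ x : ℝ, 0 < x → |gh x| ≤ K * h ^ (-(1 : ℝ) / 2)) →
        (∀ ω, 0 < Y' ω ∧
          Y' ω - cm1 * h * (Y' ω)⁻¹ =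
            Y ω + (-c₀ + c₁ * Y ω + fh (Y ω)) * h + gh (Y ω) * W ω) →
        ∫ ω, (Y' ω) ^ (2 * p) ∂P ≤ Chat * ∫ ω, (Y ω) ^ (2 * p) ∂P + Ctil := by
  set M := ∫ x, |x| ^ (2 * p) ∂gaussianReal 0 1
  set b := √(cm1 * T) + c₀ * T + K * √T
  refine ⟨3 ^ (2 * p - 1) * (1 + c₁ * T) ^ (2 * p), by positivity,
    3 ^ (2 * p - 1) * (K ^ (2 * p) * M + b ^ (2 * p)), by positivity, ?_⟩
  intro h hh hhT Ω _ P _ Y W Y' fh gh _ _ _ hW hYpos hYint _ hlaw hfh hgh hY'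
  have hpt (ω : Ω) := next_iterate_rpow_le (w := W ω) (q := 2 * p) hcm1.le hc₀.le hc₁.le hT.le
    hK hh hhT (hYpos ω).le (hY' ω).1 (by linarith) (hfh _ (hYpos ω)) (hgh _ (hYpos ω)) (hY' ω).2
  have hcancel : h ^ (-(2 * p / 2)) * h ^ (2 * p / 2) = 1 := by
    rw [← Real.rpow_add hh, neg_add_cancel, Real.rpow_zero]
  calc ∫ ω, Y' ω ^ (2 * p) ∂P
      ≤ 3 ^ (2 * p - 1) * (1 + c₁ * T) ^ (2 * p) * ∫ ω, Y ω ^ (2 * p) ∂P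
        + 3 ^ (2 * p - 1) * K ^ (2 * p) * h ^ (-(2 * p / 2)) * ∫ ω, |W ω| ^ (2 * p) ∂P
        + 3 ^ (2 * p - 1) * b ^ (2 * p) :=
        integral_le_of_le_affine (fun ω => (Real.rpow_pos_of_pos (hY' ω).1 _).le) hYint
          (integrable_abs_rpow_of_map_eq_gaussianReal hW hlaw (by linarith)) hpt
    _ = _ := by
      rw [integral_abs_rpow_of_map_eq_gaussianReal hW hlaw, Real.coe_toNNReal _ hh.le]
      linear_combination 3 ^ (2 * p - 1) * K ^ (2 * p) * M * hcancel
end
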